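/- arXiv:2512.12606 — 7 statements merged into one kernel-verified Lean document; each statement's English description precedes it below -/
import Mathlib

section
/- The additive semigroup S = {n ∈ ℕ : n ≥ k} (for a fixed k ∈ ℕ) has only the identity semigroup automorphism. -/
/-- The additive semigroup `S = {n : ℕ | k ≤ n}` has only the identity automorphism:
any additive bijection `τ` of `S` is the identity. -/
theorem stmt0 (k : ℕ) (τ : ℕ → ℕ)
    (hmap : ∀ n, k ≤ n → k ≤ τ n)
    (hinj : ∀ m n, k ≤ m → k ≤ n → τ m = τ n → m = n)
    (hsurj : ∀ n, k ≤ n → ∃ m, k ≤ m ∧ τ m = n)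
    (hadd : ∀ m n, k ≤ m → k ≤ n → τ (m + n) = τ m + τ n) :
    ∀ n, k ≤ n → τ n = n := by
  have hmul : ∀ n, k ≤ n → ∀ j, 1 ≤ j → τ (j * n) = j * τ n := by
    intro n hn j hj
    induction j with
    | zero => omega
    | succ j ih =>
      rcases Nat.eq_or_lt_of_le hj with h1 | h1
      · rw [← h1]; ring_nf
      · have hj1 : 1 ≤ j := by omega
        have hjn := ih hj1
        have hkjn : k ≤ j * n := le_trans hn (Nat.le_mul_of_pos_left n (by omega))
        rw [Nat.succ_mul, hadd _ _ hkjn hn, hjn, Nat.succ_mul]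
  set K := max k 1 with hK
  have hKk : k ≤ K := le_max_left _ _
  have hK1 : 1 ≤ K := le_max_right _ _
  have key : ∀ n, K ≤ n → K * τ n = n * τ K := by
    intro n hn
    have hkn : k ≤ n := le_trans hKk hn
    have h1 : τ (K * n) = K * τ n := hmul n hkn K hK1
    have h2 : τ (K * n) = n * τ K := by
      rw [Nat.mul_comm]; exact hmul K hKk n (le_trans hK1 hn)
    omega
  have h00 : k = 0 → τ 0 = 0 := by
    intro hk0
    have h := hadd 0 0 (by omega) (by omega)
    simp only [Nat.add_zero] at h
    omega
  have hdK : τ K = K := by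
    rcases Nat.lt_trichotomy (τ K) K with h | h | h
    · have hk' : k ≤ τ K := hmap K hKk
      have hk0 : k = 0 := by omega
      have hKe : K = 1 := by omega
      have h0 : τ 0 = 0 := h00 hk0
      rw [hKe] at h
      have h1 : τ 1 = 0 := by omega
      have := hinj 1 0 (by omega) (by omega) (by omega)
      omega
    · exact h
    · obtain ⟨m, hm, hτm⟩ := hsurj K hKk
      by_cases hmK : K ≤ m
      · have hkey := key m hmK
        rw [hτm] at hkey
        have h2 : K * (K + 1) ≤ m * τ K := Nat.mul_le_mul hmK (by omega)
        nlinarith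
      · have hk0 : k = 0 := by omega
        have hm0 : m = 0 := by omega
        have h0 : τ 0 = 0 := h00 hk0
        rw [hm0] at hτm
        omega
  intro n hn
  by_cases hnK : K ≤ n
  · have hkey := key n hnK
    rw [hdK] at hkey
    have hKpos : 0 < K := hK1
    nlinarith
  · have hk0 : k = 0 := by omega
    have hn0 : n = 0 := by omega
    rw [hn0]; exact h00 hk0
end

section
/- Let S be a numerical semigroup with critical element k (so k + ℕ ⊆ S and k − 1 ∉ S when S ≠ ℕ), and let f be an automorphism of the power semigroup P(S). If s = α(f({k})) and t = β(f({k})), then k divides s and k divides t. -/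
open Pointwise

/-- The power semigroup `P(S)`: finite nonempty subsets of `S`. -/
def PS (S : Set ℕ) : Set (Finset ℕ) := {X | X.Nonempty ∧ (X : Set ℕ) ⊆ S}

/-- `f` is an automorphism of the power semigroup `P(S)`:
an additive bijection of `P(S)` (setwise addition). -/
def IsPowerAut (S : Set ℕ) (f : Finset ℕ → Finset ℕ) : Prop :=
  (∀ X ∈ PS S, f X ∈ PS S) ∧
  (∀ X ∈ PS S, ∀ Y ∈ PS S, f X = f Y → X = Y) ∧
  (∀ Y ∈ PS S, ∃ X ∈ PS S, f X = Y) ∧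
  (∀ X ∈ PS S, ∀ Y ∈ PS S, f (X + Y) = f X + f Y)

/-- `S` is a numerical semigroup: a subsemigroup of `(ℕ, +)` with finite complement. -/
def IsNumSgp (S : Set ℕ) : Prop :=
  (∀ a ∈ S, ∀ b ∈ S, a + b ∈ S) ∧ (Sᶜ).Finite

/-- `k` is the critical element of `S`: the least `k` with `[k, ∞) ⊆ S`. -/
def IsCritical (S : Set ℕ) (k : ℕ) : Prop :=
  (∀ n, k ≤ n → n ∈ S) ∧ ∀ j, (∀ n, j ≤ n → n ∈ S) → k ≤ j

lemma singleton_mem_PS {S : Set ℕ} {x : ℕ} (hx : x ∈ S) : ({x} : Finset ℕ) ∈ PS S :=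
  ⟨Finset.singleton_nonempty x, by simpa using hx⟩

lemma min'_add_eq (X Y : Finset ℕ) (hX : X.Nonempty) (hY : Y.Nonempty) :
    (X + Y).min' (hX.add hY) = X.min' hX + Y.min' hY := by
  apply le_antisymm
  · exact Finset.min'_le _ _ (Finset.add_mem_add (X.min'_mem hX) (Y.min'_mem hY))
  · apply Finset.le_min'
    intro z hz
    rw [Finset.mem_add] at hz
    obtain ⟨x, hx, y, hy, rfl⟩ := hz
    exact add_le_add (Finset.min'_le _ _ hx) (Finset.min'_le _ _ hy)

lemma max'_add_eq (X Y : Finset ℕ) (hX : X.Nonempty) (hY : Y.Nonempty) :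
    (X + Y).max' (hX.add hY) = X.max' hX + Y.max' hY := by
  apply le_antisymm
  · apply Finset.max'_le
    intro z hz
    rw [Finset.mem_add] at hz
    obtain ⟨x, hx, y, hy, rfl⟩ := hz
    exact add_le_add (Finset.le_max' _ _ hx) (Finset.le_max' _ _ hy)
  · exact Finset.le_max' _ _ (Finset.add_mem_add (X.max'_mem hX) (Y.max'_mem hY))

/-- Generic divisibility lemma: if `μ : Finset ℕ → ℕ` is additive on nonempty
finsets, then `k ∣ μ (f {k})`. -/
lemma aux_dvd (S : Set ℕ) (hS : IsNumSgp S) (k : ℕ) (hkpos : 0 < k)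
    (hk : IsCritical S k) (f : Finset ℕ → Finset ℕ) (hf : IsPowerAut S f)
    (μ : Finset ℕ → ℕ)
    (hμ : ∀ X Y : Finset ℕ, X.Nonempty → Y.Nonempty → μ (X + Y) = μ X + μ Y) :
    k ∣ μ (f {k}) := by
  have hkS : k ∈ S := hk.1 k le_rfl
  have hk1S : k + 1 ∈ S := hk.1 (k + 1) (Nat.le_succ k)
  have hfne : ∀ x ∈ S, (f {x}).Nonempty := fun x hx =>
    (hf.1 _ (singleton_mem_PS hx)).1
  set σ : ℕ → ℕ := fun x => μ (f {x}) with hσ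
  have hσadd : ∀ a ∈ S, ∀ b ∈ S, σ (a + b) = σ a + σ b := by
    intro a ha b hb
    have hfeq : f {a + b} = f {a} + f {b} := by
      have := hf.2.2.2 {a} (singleton_mem_PS ha) {b} (singleton_mem_PS hb)
      rwa [Finset.singleton_add_singleton] at this
    simp only [hσ]
    rw [hfeq]
    exact hμ _ _ (hfne a ha) (hfne b hb)
  have hmul : ∀ a ∈ S, ∀ n : ℕ, 1 ≤ n → n * a ∈ S ∧ σ (n * a) = n * σ a := by
    intro a ha n hn
    induction n with
    | zero => omega
    | succ m ih =>
      rcases Nat.eq_zero_or_pos m with h0 | h1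
      · subst h0; constructor <;> simp [ha]
      · obtain ⟨hmem, heq⟩ := ih h1
        have hrw : (m + 1) * a = m * a + a := by ring
        constructor
        · rw [hrw]; exact hS.1 _ hmem _ ha
        · rw [hrw, hσadd _ hmem _ ha, heq]; ring
  have e1 : σ ((k + 1) * k) = (k + 1) * σ k := (hmul k hkS (k + 1) (by omega)).2
  have e2 : σ (k * (k + 1)) = k * σ (k + 1) := (hmul (k + 1) hk1S k hkpos).2
  have e3 : (k + 1) * σ k = k * σ (k + 1) := by
    rw [← e1, ← e2, Nat.mul_comm]
  have hdvd : k ∣ (k + 1) * σ k := ⟨σ (k + 1), e3⟩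
  have hcop : Nat.Coprime k (k + 1) := by simp
  exact hcop.dvd_of_dvd_mul_left hdvd

/-- If `f` is an automorphism of `P(S)` for a numerical semigroup `S` with
critical element `k`, then `k` divides both `min (f {k})` and `max (f {k})`. -/
theorem stmt2 (S : Set ℕ) (hS : IsNumSgp S) (k : ℕ) (hk : IsCritical S k)
    (f : Finset ℕ → Finset ℕ) (hf : IsPowerAut S f)
    (hne : (f {k}).Nonempty) :
    k ∣ (f {k}).min' hne ∧ k ∣ (f {k}).max' hne := by
  set μ : Finset ℕ → ℕ := fun X => if h : X.Nonempty then X.min' h else 0 with hμdef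
  set ν : Finset ℕ → ℕ := fun X => if h : X.Nonempty then X.max' h else 0 with hνdef
  have hμadd : ∀ X Y : Finset ℕ, X.Nonempty → Y.Nonempty → μ (X + Y) = μ X + μ Y := by
    intro X Y hX hY
    simp only [hμdef, dif_pos hX, dif_pos hY, dif_pos (hX.add hY)]
    exact min'_add_eq X Y hX hY
  have hνadd : ∀ X Y : Finset ℕ, X.Nonempty → Y.Nonempty → ν (X + Y) = ν X + ν Y := by
    intro X Y hX hY
    simp only [hνdef, dif_pos hX, dif_pos hY, dif_pos (hX.add hY)]
    exact max'_add_eq X Y hX hY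
  have hμval : μ (f {k}) = (f {k}).min' hne := dif_pos hne
  have hνval : ν (f {k}) = (f {k}).max' hne := dif_pos hne
  rcases Nat.eq_zero_or_pos k with hk0 | hkpos
  · subst hk0
    have h0S : (0 : ℕ) ∈ S := hk.1 0 le_rfl
    have hidem : f {0} = f {0} + f {0} := by
      have := hf.2.2.2 {0} (singleton_mem_PS h0S) {0} (singleton_mem_PS h0S)
      simpa using this
    have hμ0 : μ (f {0}) = μ (f {0}) + μ (f {0}) := by
      conv_lhs => rw [hidem]
      exact hμadd _ _ hne hne
    have hν0 : ν (f {0}) = ν (f {0}) + ν (f {0}) := by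
      conv_lhs => rw [hidem]
      exact hνadd _ _ hne hne
    constructor
    · rw [← hμval]; omega
    · rw [← hνval]; omega
  · exact ⟨hμval ▸ aux_dvd S hS k hkpos hk f hf μ hμadd,
      hνval ▸ aux_dvd S hS k hkpos hk f hf ν hνadd⟩
end

section
/- Let S be a numerical semigroup and f an automorphism of the power semigroup P(S). Then for every X ∈ P(S), the minimum element of f(X) equals the minimum element of X, and the maximum element of f(X) equals the maximum element of X. -/
open Pointwise

namespace Stmt3Aux


noncomputable def mn (X : Finset ℕ) : ℕ := sInf (X : Set ℕ)
noncomputable def mx (X : Finset ℕ) : ℕ := sSup (X : Set ℕ)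

lemma mn_mem {X : Finset ℕ} (h : X.Nonempty) : mn X ∈ X := by
  have := Nat.sInf_mem (s := (X : Set ℕ)) (by exact_mod_cast h)
  exact_mod_cast this

lemma mn_le {X : Finset ℕ} {x : ℕ} (hx : x ∈ X) : mn X ≤ x :=
  Nat.sInf_le (by exact_mod_cast hx)

lemma mx_mem {X : Finset ℕ} (h : X.Nonempty) : mx X ∈ X := by
  have := Nat.sSup_mem (s := (X : Set ℕ)) (by exact_mod_cast h) X.finite_toSet.bddAbove
  exact_mod_cast this

lemma le_mx {X : Finset ℕ} {x : ℕ} (hx : x ∈ X) : x ≤ mx X :=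
  le_csSup X.finite_toSet.bddAbove (by exact_mod_cast hx)

lemma mn_le_mx {X : Finset ℕ} (h : X.Nonempty) : mn X ≤ mx X := mn_le (mx_mem h)

lemma min'_eq_mn {X : Finset ℕ} (h : X.Nonempty) : X.min' h = mn X :=
  le_antisymm (Finset.min'_le _ _ (mn_mem h)) (mn_le (X.min'_mem h))

lemma max'_eq_mx {X : Finset ℕ} (h : X.Nonempty) : X.max' h = mx X :=
  le_antisymm (le_mx (X.max'_mem h)) (Finset.le_max' _ _ (mx_mem h))

lemma mn_add {X Y : Finset ℕ} (hX : X.Nonempty) (hY : Y.Nonempty) :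
    mn (X + Y) = mn X + mn Y := by
  apply le_antisymm
  · exact mn_le (Finset.add_mem_add (mn_mem hX) (mn_mem hY))
  · have h := mn_mem (hX.add hY)
    rw [Finset.mem_add] at h
    obtain ⟨x, hx, y, hy, hxy⟩ := h
    calc mn X + mn Y ≤ x + y := Nat.add_le_add (mn_le hx) (mn_le hy)
    _ = mn (X + Y) := hxy

lemma mx_add {X Y : Finset ℕ} (hX : X.Nonempty) (hY : Y.Nonempty) :
    mx (X + Y) = mx X + mx Y := by
  apply le_antisymm
  · have h := mx_mem (hX.add hY)
    rw [Finset.mem_add] at h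
    obtain ⟨x, hx, y, hy, hxy⟩ := h
    calc mx (X + Y) = x + y := hxy.symm
    _ ≤ mx X + mx Y := Nat.add_le_add (le_mx hx) (le_mx hy)
  · exact le_mx (Finset.add_mem_add (mx_mem hX) (mx_mem hY))

lemma mn_pair {p q : ℕ} (h : p ≤ q) : mn ({p, q} : Finset ℕ) = p := by
  have h1 := mn_mem (X := ({p, q} : Finset ℕ)) ⟨p, by simp⟩
  have h2 := mn_le (X := ({p, q} : Finset ℕ)) (x := p) (by simp)
  simp only [Finset.mem_insert, Finset.mem_singleton] at h1
  omega

lemma mx_pair {p q : ℕ} (h : p ≤ q) : mx ({p, q} : Finset ℕ) = q := by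
  have h1 := mx_mem (X := ({p, q} : Finset ℕ)) ⟨p, by simp⟩
  have h2 := le_mx (X := ({p, q} : Finset ℕ)) (x := q) (by simp)
  simp only [Finset.mem_insert, Finset.mem_singleton] at h1
  omega

lemma mn_singleton (n : ℕ) : mn ({n} : Finset ℕ) = n := by
  simpa using mn_pair (le_refl n)

lemma mx_singleton (n : ℕ) : mx ({n} : Finset ℕ) = n := by
  simpa using mx_pair (le_refl n)

lemma add_Icc {X : Finset ℕ} (h : X.Nonempty) (k N : ℕ) (hN : mx X ≤ mn X + N) :
    X + Finset.Icc k (k + N) = Finset.Icc (mn X + k) (mx X + k + N) := by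
  ext w
  simp only [Finset.mem_add, Finset.mem_Icc]
  constructor
  · rintro ⟨x, hx, z, hz, rfl⟩
    have h1 := mn_le hx
    have h2 := le_mx hx
    omega
  · rintro ⟨h1, h2⟩
    by_cases hc : w ≤ mn X + k + N
    · exact ⟨mn X, mn_mem h, w - mn X, by omega, by omega⟩
    · exact ⟨mx X, mx_mem h, w - mx X, by omega, by omega⟩

lemma linear_growth (x : ℕ → ℕ) (c d : ℕ) (E : ∀ j, x (j + 1) + c = x j + d) :
    c ≤ d ∧ ∀ j, x j = x 0 + j * (d - c) := by
  have key : ∀ j, x j + j * c = x 0 + j * d := by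
    intro j
    induction j with
    | zero => simp
    | succ n ih =>
      have e := E n
      have h1 : (n + 1) * c = n * c + c := by ring
      have h2 : (n + 1) * d = n * d + d := by ring
      rw [h1, h2]
      linarith
  have hcd : c ≤ d := by
    by_contra hlt
    push_neg at hlt
    have h := key (x 0 + 1)
    have h2 : (x 0 + 1) * (d + 1) ≤ (x 0 + 1) * c := Nat.mul_le_mul_left _ hlt
    have h3 : (x 0 + 1) * (d + 1) = (x 0 + 1) * d + x 0 + 1 := by ring
    omega
  refine ⟨hcd, fun j => ?_⟩
  have h := key j
  have h2 : j * d = j * c + j * (d - c) := by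
    have h3 : d = c + (d - c) := by omega
    calc j * d = j * (c + (d - c)) := by rw [← h3]
    _ = j * c + j * (d - c) := by ring
  omega


section Main

variable {S : Set ℕ} (hS : IsNumSgp S) {f : Finset ℕ → Finset ℕ} (hf : IsPowerAut S f)
variable {k : ℕ} (hk : ∀ n, k ≤ n → n ∈ S)

lemma exists_tail (hS : IsNumSgp S) : ∃ k : ℕ, ∀ n, k ≤ n → n ∈ S := by
  obtain ⟨m, hm⟩ := hS.2.bddAbove
  refine ⟨m + 1, fun n hn => ?_⟩
  by_contra h
  have := hm (Set.mem_compl h)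
  omega

lemma pair_mem_PS {p q : ℕ} (hp : p ∈ S) (hq : q ∈ S) : ({p, q} : Finset ℕ) ∈ PS S := by
  refine ⟨⟨p, by simp⟩, ?_⟩
  intro a ha
  simp only [Finset.coe_insert, Finset.coe_singleton, Set.mem_insert_iff,
    Set.mem_singleton_iff] at ha
  rcases ha with rfl | rfl <;> assumption

lemma singleton_mem_PS {n : ℕ} (hn : n ∈ S) : ({n} : Finset ℕ) ∈ PS S := by
  simpa using pair_mem_PS hn hn

include hS in
lemma add_mem_PS {X Y : Finset ℕ} (hX : X ∈ PS S) (hY : Y ∈ PS S) : X + Y ∈ PS S := by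
  refine ⟨hX.1.add hY.1, ?_⟩
  intro a ha
  rw [Finset.mem_coe, Finset.mem_add] at ha
  obtain ⟨y, hy, z, hz, rfl⟩ := ha
  exact hS.1 y (hX.2 hy) z (hY.2 hz)

include hk in
lemma exists_absorb {X Y : Finset ℕ} (hX : X.Nonempty) (hY : Y.Nonempty)
    (h1 : mn X = mn Y) (h2 : mx X = mx Y) :
    ∃ Z ∈ PS S, X + Z = Y + Z := by
  refine ⟨Finset.Icc k (k + (mx X - mn X)), ⟨⟨k, by simp⟩, ?_⟩, ?_⟩
  · intro a ha
    rw [Finset.coe_Icc, Set.mem_Icc] at ha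
    exact hk a ha.1
  · have hm := mn_le_mx hX
    rw [add_Icc hX k _ (by omega), add_Icc hY k _ (by omega), h1, h2]

include hf hk in
lemma img_minmax {X Y : Finset ℕ} (hX : X ∈ PS S) (hY : Y ∈ PS S)
    (h1 : mn X = mn Y) (h2 : mx X = mx Y) :
    mn (f X) = mn (f Y) ∧ mx (f X) = mx (f Y) := by
  obtain ⟨Z, hZ, hXZ⟩ := exists_absorb hk hX.1 hY.1 h1 h2
  have e : f X + f Z = f Y + f Z := by
    rw [← hf.2.2.2 X hX Z hZ, hXZ, hf.2.2.2 Y hY Z hZ]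
  have n1 : (f X).Nonempty := (hf.1 X hX).1
  have n2 : (f Y).Nonempty := (hf.1 Y hY).1
  have nZ : (f Z).Nonempty := (hf.1 Z hZ).1
  constructor
  · have := congrArg mn e
    rw [mn_add n1 nZ, mn_add n2 nZ] at this
    omega
  · have := congrArg mx e
    rw [mx_add n1 nZ, mx_add n2 nZ] at this
    omega

include hS hf hk in
lemma forced {n : ℕ} (hn : n ∈ S) {Y : Finset ℕ} (hY : Y ∈ PS S)
    (h1 : mn Y = mn (f {n})) (h2 : mx Y = mx (f {n})) : Y = f {n} := by
  have hnPS : ({n} : Finset ℕ) ∈ PS S := singleton_mem_PS hn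
  have hfn : f {n} ∈ PS S := hf.1 _ hnPS
  obtain ⟨Z, hZ, e⟩ := exists_absorb hk hY.1 hfn.1 h1 h2
  obtain ⟨W, hW, rfl⟩ := hf.2.2.1 Z hZ
  obtain ⟨U, hU, rfl⟩ := hf.2.2.1 Y hY
  have e2 : f (U + W) = f ({n} + W) := by
    rw [hf.2.2.2 U hU W hW, hf.2.2.2 _ hnPS W hW]; exact e
  have e3 : U + W = {n} + W := hf.2.1 _ (add_mem_PS hS hU hW) _ (add_mem_PS hS hnPS hW) e2
  have hmnU : mn U = n := by
    have := congrArg mn e3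
    rw [mn_add hU.1 hW.1, mn_add (Finset.singleton_nonempty n) hW.1, mn_singleton] at this
    omega
  have hmxU : mx U = n := by
    have := congrArg mx e3
    rw [mx_add hU.1 hW.1, mx_add (Finset.singleton_nonempty n) hW.1, mx_singleton] at this
    omega
  have : U = {n} := by
    rw [Finset.eq_singleton_iff_unique_mem]
    refine ⟨hmnU ▸ mn_mem hU.1, fun x hx => ?_⟩
    have := mn_le hx
    have := le_mx hx
    omega
  rw [this]

include hS hf hk in
lemma gapless {n s : ℕ} (hn : n ∈ S) (hs : s ∈ S)
    (h1 : mn (f {n}) < s) (h2 : s < mx (f {n})) : False := by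
  have hnPS : ({n} : Finset ℕ) ∈ PS S := singleton_mem_PS hn
  have hfn : f {n} ∈ PS S := hf.1 _ hnPS
  have hpS : mn (f {n}) ∈ S := hfn.2 (mn_mem hfn.1)
  have hqS : mx (f {n}) ∈ S := hfn.2 (mx_mem hfn.1)
  have hpq : mn (f {n}) ≤ mx (f {n}) := mn_le_mx hfn.1
  -- Y1 = {p, q}, Y2 = insert s {p, q}
  have hY1 : ({mn (f {n}), mx (f {n})} : Finset ℕ) ∈ PS S := pair_mem_PS hpS hqS
  have hY2 : (insert s {mn (f {n}), mx (f {n})} : Finset ℕ) ∈ PS S := by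
    refine ⟨⟨s, by simp⟩, ?_⟩
    intro a ha
    simp only [Finset.coe_insert, Finset.coe_singleton, Set.mem_insert_iff,
      Set.mem_singleton_iff] at ha
    rcases ha with rfl | rfl | rfl <;> assumption
  have hmn2 : mn (insert s {mn (f {n}), mx (f {n})} : Finset ℕ) = mn (f {n}) := by
    have ha := mn_mem hY2.1
    have hb := mn_le (X := (insert s {mn (f {n}), mx (f {n})} : Finset ℕ))
      (x := mn (f {n})) (by simp)
    simp only [Finset.mem_insert, Finset.mem_singleton] at ha
    omega
  have hmx2 : mx (insert s {mn (f {n}), mx (f {n})} : Finset ℕ) = mx (f {n}) := by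
    have ha := mx_mem hY2.1
    have hb := le_mx (X := (insert s {mn (f {n}), mx (f {n})} : Finset ℕ))
      (x := mx (f {n})) (by simp)
    simp only [Finset.mem_insert, Finset.mem_singleton] at ha
    omega
  have e1 : ({mn (f {n}), mx (f {n})} : Finset ℕ) = f {n} :=
    forced hS hf hk hn hY1 (mn_pair hpq) (mx_pair hpq)
  have e2 : (insert s {mn (f {n}), mx (f {n})} : Finset ℕ) = f {n} :=
    forced hS hf hk hn hY2 hmn2 hmx2
  have : s ∈ ({mn (f {n}), mx (f {n})} : Finset ℕ) := by
    rw [e1, ← e2]; simp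
  simp only [Finset.mem_insert, Finset.mem_singleton] at this
  omega

include hf hk in
lemma rep {X : Finset ℕ} (hX : X ∈ PS S) :
    mn (f X) = mn (f {mn X, mx X}) ∧ mx (f X) = mx (f {mn X, mx X}) := by
  have hp : mn X ∈ S := hX.2 (mn_mem hX.1)
  have hq : mx X ∈ S := hX.2 (mx_mem hX.1)
  exact img_minmax hf hk hX (pair_mem_PS hp hq)
    (mn_pair (mn_le_mx hX.1)).symm (mx_pair (mn_le_mx hX.1)).symm


end Main

lemma endgame (S : Set ℕ) (k : ℕ) (hk : ∀ n, k ≤ n → n ∈ S)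
    (G1 G2 : ℕ → ℕ → ℕ)
    (hadd1 : ∀ p q r t, p ∈ S → q ∈ S → p ≤ q → r ∈ S → t ∈ S → r ≤ t →
      G1 (p + r) (q + t) = G1 p q + G1 r t)
    (hadd2 : ∀ p q r t, p ∈ S → q ∈ S → p ≤ q → r ∈ S → t ∈ S → r ≤ t →
      G2 (p + r) (q + t) = G2 p q + G2 r t)
    (hmem : ∀ p q, p ∈ S → q ∈ S → p ≤ q → G1 p q ≤ G2 p q)
    (hsurj : ∀ p q, p ∈ S → q ∈ S → p ≤ q →
      ∃ x y, x ∈ S ∧ y ∈ S ∧ x ≤ y ∧ G1 x y = p ∧ G2 x y = q)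
    (hgap : ∀ n s, n ∈ S → s ∈ S → G1 n n < s → s < G2 n n → False) :
    ∀ p q, p ∈ S → q ∈ S → p ≤ q → G1 p q = p ∧ G2 p q = q := by
  -- generic diagonal linearity
  have diag : ∀ G : ℕ → ℕ → ℕ,
      (∀ p q r t, p ∈ S → q ∈ S → p ≤ q → r ∈ S → t ∈ S → r ≤ t →
        G (p + r) (q + t) = G p q + G r t) →
      ∃ L, ∀ a, a ∈ S → G a a = a * L := by
    intro G hadd
    have dstep : ∀ j : ℕ,
        G (k + (j + 1)) (k + (j + 1)) + G k k = G (k + j) (k + j) + G (k + 1) (k + 1) := by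
      intro j
      have e1 := hadd (k + (j + 1)) (k + (j + 1)) k k (hk _ (by omega)) (hk _ (by omega))
        le_rfl (hk _ le_rfl) (hk _ le_rfl) le_rfl
      have e2 := hadd (k + j) (k + j) (k + 1) (k + 1) (hk _ (by omega)) (hk _ (by omega))
        le_rfl (hk _ (by omega)) (hk _ (by omega)) le_rfl
      have hidx : k + (j + 1) + k = k + j + (k + 1) := by ring
      rw [hidx] at e1
      omega
    obtain ⟨hcd, hlin⟩ := linear_growth (fun j => G (k + j) (k + j)) (G k k)
      (G (k + 1) (k + 1)) dstep
    refine ⟨G (k + 1) (k + 1) - G k k, fun a ha => ?_⟩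
    have e := hadd a a k k ha ha le_rfl (hk _ le_rfl) (hk _ le_rfl) le_rfl
    have h1 := hlin a
    simp only [Nat.add_zero] at h1
    have hc : k + a = a + k := by ring
    rw [hc] at h1
    omega
  -- generic global form
  have vert : ∀ G : ℕ → ℕ → ℕ,
      (∀ p q r t, p ∈ S → q ∈ S → p ≤ q → r ∈ S → t ∈ S → r ≤ t →
        G (p + r) (q + t) = G p q + G r t) →
      ∀ L, (∀ a, a ∈ S → G a a = a * L) →
      ∃ M, ∀ x y, x ∈ S → y ∈ S → x ≤ y → G x y = x * L + (y - x) * M := by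
    intro G hadd L hd
    have vstep : ∀ x y, x ∈ S → k ≤ y → x ≤ y →
        ∀ j, G x (y + (j + 1)) + G k k = G x (y + j) + G k (k + 1) := by
      intro x y hx hy hxy j
      have e1 := hadd x (y + (j + 1)) k k hx (hk _ (by omega)) (by omega)
        (hk _ le_rfl) (hk _ le_rfl) le_rfl
      have e2 := hadd x (y + j) k (k + 1) hx (hk _ (by omega)) (by omega)
        (hk _ le_rfl) (hk _ (by omega)) (by omega)
      have hidx : y + (j + 1) + k = y + j + (k + 1) := by ring
      rw [hidx] at e1
      omega
    refine ⟨G k (k + 1) - k * L, fun x y hx hy hxy => ?_⟩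
    have e := hadd x y k k hx hy hxy (hk _ le_rfl) (hk _ le_rfl) le_rfl
    obtain ⟨hcd, hlin⟩ := linear_growth (fun j => G (x + k) (x + k + j)) (G k k)
      (G k (k + 1)) (vstep (x + k) (x + k) (hk _ (by omega)) (by omega) le_rfl)
    have h1 := hlin (y - x)
    simp only [Nat.add_zero] at h1
    have hix : x + k + (y - x) = y + k := by omega
    rw [hix] at h1
    have hdk : G k k = k * L := hd k (hk _ le_rfl)
    have hdxk : G (x + k) (x + k) = (x + k) * L := hd _ (hk _ (by omega))
    rw [hdk] at e h1
    rw [hdxk] at h1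
    have hsplit : (x + k) * L = x * L + k * L := by ring
    omega
  obtain ⟨L1, hd1⟩ := diag G1 hadd1
  obtain ⟨L2, hd2⟩ := diag G2 hadd2
  -- L1 = L2
  have hL12 : L1 ≤ L2 := by
    have h := hmem (k + 1) (k + 1) (hk _ (by omega)) (hk _ (by omega)) le_rfl
    rw [hd1 _ (hk _ (by omega)), hd2 _ (hk _ (by omega))] at h
    exact Nat.le_of_mul_le_mul_left h (by omega)
  have hL : L1 = L2 := by
    rcases Nat.lt_or_ge L1 L2 with hlt | hge
    · exfalso
      have hnS : (2 * k + 2) ∈ S := hk _ (by omega)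
      have hsS : ((2 * k + 2) * L1 + k + 1) ∈ S := hk _ (by omega)
      apply hgap _ _ hnS hsS
      · rw [hd1 _ hnS]; omega
      · rw [hd2 _ hnS]
        have h1 : (2 * k + 2) * (L1 + 1) ≤ (2 * k + 2) * L2 := Nat.mul_le_mul_left _ hlt
        have h2 : (2 * k + 2) * (L1 + 1) = (2 * k + 2) * L1 + (2 * k + 2) := by ring
        omega
    · omega
  subst hL
  obtain ⟨M1, hform1⟩ := vert G1 hadd1 L1 hd1
  obtain ⟨M2, hform2⟩ := vert G2 hadd2 L1 hd2
  -- target (k, k+1): gives M2 = M1 + 1 and x1*L1 + M1 = k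
  obtain ⟨x1, y1, hx1S, hy1S, hxy1, e11, e12⟩ :=
    hsurj k (k + 1) (hk _ le_rfl) (hk _ (by omega)) (by omega)
  rw [hform1 x1 y1 hx1S hy1S hxy1] at e11
  rw [hform2 x1 y1 hx1S hy1S hxy1] at e12
  have hDnz : y1 - x1 ≠ 0 := by
    intro h
    rw [h, Nat.zero_mul] at e11 e12
    omega
  have hM12 : M1 < M2 := by
    by_contra h
    push_neg at h
    have := Nat.mul_le_mul_left (y1 - x1) h
    omega
  have hmul1 : (y1 - x1) * (M1 + 1) ≤ (y1 - x1) * M2 := Nat.mul_le_mul_left _ hM12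
  have hmul2 : (y1 - x1) * (M1 + 1) = (y1 - x1) * M1 + (y1 - x1) := by ring
  have hD1 : y1 - x1 = 1 := by omega
  have hM2 : M2 = M1 + 1 := by
    rw [hD1, Nat.one_mul] at e11 e12
    omega
  rw [hD1, Nat.one_mul] at e11
  -- target (k+1, k+2): gives x2*L1 + M1 = k+1, hence L1 = 1
  obtain ⟨x2, y2, hx2S, hy2S, hxy2, e21, e22⟩ :=
    hsurj (k + 1) (k + 2) (hk _ (by omega)) (hk _ (by omega)) (by omega)
  rw [hform1 x2 y2 hx2S hy2S hxy2] at e21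
  rw [hform2 x2 y2 hx2S hy2S hxy2, hM2] at e22
  have hmul3 : (y2 - x2) * (M1 + 1) = (y2 - x2) * M1 + (y2 - x2) := by ring
  have hD2 : y2 - x2 = 1 := by omega
  rw [hD2, Nat.one_mul] at e21
  have hLone : L1 = 1 := by
    rcases Nat.eq_zero_or_pos L1 with h0 | hpos
    · subst h0
      simp only [Nat.mul_zero] at e11 e21
      omega
    · have hxx : x1 < x2 := by
        by_contra h
        push_neg at h
        have := Nat.mul_le_mul_right L1 h
        omega
      have h1 : (x1 + 1) * L1 ≤ x2 * L1 := Nat.mul_le_mul_right L1 hxx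
      have h2 : (x1 + 1) * L1 = x1 * L1 + L1 := by ring
      omega
  -- target (k, 2k+1): gives M1 = 0
  obtain ⟨x3, y3, hx3S, hy3S, hxy3, e31, e32⟩ :=
    hsurj k (2 * k + 1) (hk _ le_rfl) (hk _ (by omega)) (by omega)
  rw [hform1 x3 y3 hx3S hy3S hxy3, hLone, Nat.mul_one] at e31
  rw [hform2 x3 y3 hx3S hy3S hxy3, hLone, hM2, Nat.mul_one] at e32
  have hmul4 : (y3 - x3) * (M1 + 1) = (y3 - x3) * M1 + (y3 - x3) := by ring
  have hDk : y3 - x3 = k + 1 := by omega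
  have hM10 : M1 = 0 := by
    rcases Nat.eq_zero_or_pos M1 with h | h
    · exact h
    · exfalso
      have h1 : (k + 1) * 1 ≤ (k + 1) * M1 := Nat.mul_le_mul_left _ h
      rw [Nat.mul_one] at h1
      rw [hDk] at e31
      omega
  intro p q hp hq hpq
  constructor
  · rw [hform1 p q hp hq hpq, hLone, hM10]
    simp
  · rw [hform2 p q hp hq hpq, hLone, hM2, hM10]
    simp
    omega


end Stmt3Aux

open Stmt3Aux in
/-- An automorphism of `P(S)` preserves the minimum and the maximum of every set. -/
theorem stmt3 (S : Set ℕ) (hS : IsNumSgp S) (f : Finset ℕ → Finset ℕ)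
    (hf : IsPowerAut S f) :
    ∀ X : Finset ℕ, ∀ hXne : X.Nonempty, (X : Set ℕ) ⊆ S →
      ∀ hfX : (f X).Nonempty,
        (f X).min' hfX = X.min' hXne ∧ (f X).max' hfX = X.max' hXne := by
  obtain ⟨k, hk⟩ := exists_tail hS
  have hA1 : ∀ p q r t, p ∈ S → q ∈ S → p ≤ q → r ∈ S → t ∈ S → r ≤ t →
      mn (f {p + r, q + t}) = mn (f {p, q}) + mn (f {r, t}) ∧
      mx (f {p + r, q + t}) = mx (f {p, q}) + mx (f {r, t}) := by
    intro p q r t hp hq hpq hr ht hrt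
    have hX : ({p, q} : Finset ℕ) ∈ PS S := pair_mem_PS hp hq
    have hY : ({r, t} : Finset ℕ) ∈ PS S := pair_mem_PS hr ht
    have hXY : ({p, q} : Finset ℕ) + {r, t} ∈ PS S := add_mem_PS hS hX hY
    have h1 : mn (({p, q} : Finset ℕ) + {r, t}) = p + r := by
      rw [mn_add hX.1 hY.1, mn_pair hpq, mn_pair hrt]
    have h2 : mx (({p, q} : Finset ℕ) + {r, t}) = q + t := by
      rw [mx_add hX.1 hY.1, mx_pair hpq, mx_pair hrt]
    have hr1 := (rep hf hk hXY).1
    have hr2 := (rep hf hk hXY).2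
    rw [h1, h2] at hr1 hr2
    rw [hf.2.2.2 _ hX _ hY] at hr1 hr2
    rw [mn_add (hf.1 _ hX).1 (hf.1 _ hY).1] at hr1
    rw [mx_add (hf.1 _ hX).1 (hf.1 _ hY).1] at hr2
    exact ⟨hr1.symm, hr2.symm⟩
  have main := endgame S k hk (fun p q => mn (f {p, q})) (fun p q => mx (f {p, q}))
    (fun p q r t hp hq hpq hr ht hrt => (hA1 p q r t hp hq hpq hr ht hrt).1)
    (fun p q r t hp hq hpq hr ht hrt => (hA1 p q r t hp hq hpq hr ht hrt).2)
    (fun p q hp hq hpq => mn_le_mx (hf.1 _ (pair_mem_PS hp hq)).1)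
    ?hsurj ?hgap
  case hsurj =>
    intro p q hp hq hpq
    obtain ⟨X, hX, hfX⟩ := hf.2.2.1 {p, q} (pair_mem_PS hp hq)
    refine ⟨mn X, mx X, hX.2 (mn_mem hX.1), hX.2 (mx_mem hX.1), mn_le_mx hX.1, ?_, ?_⟩
    · show mn (f {mn X, mx X}) = p
      rw [← (rep hf hk hX).1, hfX, mn_pair hpq]
    · show mx (f {mn X, mx X}) = q
      rw [← (rep hf hk hX).2, hfX, mx_pair hpq]
  case hgap =>
    intro n s hn hs h1 h2
    have hnn : ({n, n} : Finset ℕ) = {n} := by simp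
    simp only [hnn] at h1 h2
    exact gapless hS hf hk hn hs h1 h2
  intro X hXne hXS hfX
  have hX : X ∈ PS S := ⟨hXne, hXS⟩
  obtain ⟨g1, g2⟩ := main (mn X) (mx X) (hX.2 (mn_mem hXne)) (hX.2 (mx_mem hXne))
    (mn_le_mx hXne)
  constructor
  · rw [min'_eq_mn, min'_eq_mn, (rep hf hk hX).1]
    exact g1
  · rw [max'_eq_mx, max'_eq_mx, (rep hf hk hX).2]
    exact g2
end

section
/- Let S be a numerical semigroup with critical element k and f an automorphism of P(S). Then f fixes every discrete interval [i, j] = {x ∈ ℕ : i ≤ x ≤ j} with k ≤ i ≤ j, i.e., f([i, j]) = [i, j]. -/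
/-!
Singletons are exactly the cancellative elements of `P(S)`, so `f {s} = {σ s}` for an additive
bijection `σ` of `S`. Writing `a * b` as an iterated sum in two ways gives `a σ(b) = b σ(a)`, so
`σ` is strictly increasing, hence `σ ≥ id`; the same holds for `σ⁻¹`, so `σ = id`.

The defect `min X - min f(X)` is additive and at most `k` (shift `X` by a singleton `≥ k`), so it
vanishes. Adding to `X` an interval `[k, k + l]` with `l ≥ width X` gives an interval, and this
shows that `f` multiplies all widths by the same factor, which is `1` because `f` is invertible.
Hence `f` fixes `[k, k + 1]`, the only set with minimum `k` and width `1`; by additivity it fixes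
`[k, k + n] + {k} = [k, k + n - 1] + [k, k + 1]`, and then `[i, j] + {k} = {i} + [k, k + j - i]`.
-/

open Pointwise

open Finset

-- `minElt ∅ = maxElt ∅ = 0` (junk values).
noncomputable def minElt (X : Finset ℕ) : ℕ := if h : X.Nonempty then X.min' h else 0

noncomputable def maxElt (X : Finset ℕ) : ℕ := if h : X.Nonempty then X.max' h else 0

noncomputable def width (X : Finset ℕ) : ℕ := maxElt X - minElt X

section MinMax

variable {X Y : Finset ℕ} {x a b : ℕ}

lemma minElt_mem (h : X.Nonempty) : minElt X ∈ X := by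
  rw [minElt, dif_pos h]; exact X.min'_mem h

lemma maxElt_mem (h : X.Nonempty) : maxElt X ∈ X := by
  rw [maxElt, dif_pos h]; exact X.max'_mem h

lemma minElt_le (hx : x ∈ X) : minElt X ≤ x := by
  rw [minElt, dif_pos ⟨x, hx⟩]; exact X.min'_le x hx

lemma le_maxElt (hx : x ∈ X) : x ≤ maxElt X := by
  rw [maxElt, dif_pos ⟨x, hx⟩]; exact X.le_max' x hx

lemma minElt_le_maxElt (h : X.Nonempty) : minElt X ≤ maxElt X :=
  le_maxElt (minElt_mem h)

lemma minElt_add (hX : X.Nonempty) (hY : Y.Nonempty) :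
    minElt (X + Y) = minElt X + minElt Y := by
  refine le_antisymm (minElt_le (add_mem_add (minElt_mem hX) (minElt_mem hY))) ?_
  obtain ⟨x, hx, y, hy, hxy⟩ := mem_add.1 (minElt_mem (hX.add hY))
  rw [← hxy]
  exact Nat.add_le_add (minElt_le hx) (minElt_le hy)

lemma maxElt_add (hX : X.Nonempty) (hY : Y.Nonempty) :
    maxElt (X + Y) = maxElt X + maxElt Y := by
  refine le_antisymm ?_ (le_maxElt (add_mem_add (maxElt_mem hX) (maxElt_mem hY)))
  obtain ⟨x, hx, y, hy, hxy⟩ := mem_add.1 (maxElt_mem (hX.add hY))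
  rw [← hxy]
  exact Nat.add_le_add (le_maxElt hx) (le_maxElt hy)

lemma minElt_singleton (a : ℕ) : minElt {a} = a := by
  simp [minElt]

lemma maxElt_singleton (a : ℕ) : maxElt {a} = a := by
  simp [maxElt]

lemma minElt_Icc (h : a ≤ b) : minElt (Icc a b) = a :=
  le_antisymm (minElt_le (left_mem_Icc.2 h)) (mem_Icc.1 (minElt_mem (nonempty_Icc.2 h))).1

lemma maxElt_Icc (h : a ≤ b) : maxElt (Icc a b) = b :=
  le_antisymm (mem_Icc.1 (maxElt_mem (nonempty_Icc.2 h))).2 (le_maxElt (right_mem_Icc.2 h))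

lemma minElt_nsmul (hX : X.Nonempty) (n : ℕ) : minElt ((n + 1) • X) = (n + 1) * minElt X := by
  induction n with
  | zero => simp only [zero_add, one_nsmul, one_mul]
  | succ n ih => rw [succ_nsmul, minElt_add hX.nsmul hX, ih, ← Nat.succ_mul]

lemma width_add (hX : X.Nonempty) (hY : Y.Nonempty) : width (X + Y) = width X + width Y := by
  have := minElt_le_maxElt hX
  have := minElt_le_maxElt hY
  simp only [width, minElt_add hX hY, maxElt_add hX hY]
  omega

lemma width_singleton (a : ℕ) : width {a} = 0 := by
  simp [width, minElt_singleton, maxElt_singleton]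

lemma width_Icc (h : a ≤ b) : width (Icc a b) = b - a := by
  rw [width, minElt_Icc h, maxElt_Icc h]

lemma eq_Icc_of_width_le_one (h : X.Nonempty) (hw : width X ≤ 1) :
    X = Icc (minElt X) (maxElt X) := by
  ext x
  rw [mem_Icc]
  refine ⟨fun hx => ⟨minElt_le hx, le_maxElt hx⟩, fun hx => ?_⟩
  rcases (show x = minElt X ∨ x = maxElt X by unfold width at hw; omega) with rfl | rfl
  exacts [minElt_mem h, maxElt_mem h]

end MinMax

section Arith

variable {X : Finset ℕ} {a b c d : ℕ}

lemma singleton_add_Icc (a b c : ℕ) : ({a} : Finset ℕ) + Icc b c = Icc (a + b) (a + c) := by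
  rw [singleton_add, vadd_finset_def]
  exact image_add_left_Icc b c a

lemma singleton_add_right_injective (a : ℕ) :
    Function.Injective fun X : Finset ℕ => ({a} : Finset ℕ) + X := by
  intro X Y h
  simp only [singleton_add, vadd_finset_def] at h
  exact image_injective (add_right_injective a) h

lemma Icc_add_Icc (hab : a ≤ b) (hcd : c ≤ d) : Icc a b + Icc c d = Icc (a + c) (b + d) := by
  ext s
  simp only [mem_add, mem_Icc]
  constructor
  · rintro ⟨x, hx, y, hy, rfl⟩; omega
  · rintro ⟨hs1, hs2⟩
    exact ⟨min b (s - c), by omega, s - min b (s - c), by omega, by omega⟩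

lemma add_Icc_of_width_le {l : ℕ} (hX : X.Nonempty) (hl : width X ≤ l) :
    X + Icc a (a + l) = Icc (minElt X + a) (maxElt X + a + l) := by
  have := minElt_le_maxElt hX
  unfold width at hl
  ext s
  rw [mem_add, mem_Icc]
  constructor
  · rintro ⟨x, hx, y, hy, rfl⟩
    have := minElt_le hx
    have := le_maxElt hx
    rw [mem_Icc] at hy
    omega
  · rintro ⟨hs1, hs2⟩
    by_cases hs : s ≤ minElt X + a + l
    · exact ⟨minElt X, minElt_mem hX, s - minElt X, mem_Icc.2 (by omega), by omega⟩
    · exact ⟨maxElt X, maxElt_mem hX, s - maxElt X, mem_Icc.2 (by omega), by omega⟩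

end Arith

section PowerSemigroup

variable {S : Set ℕ} {k : ℕ} {X Y : Finset ℕ}

lemma add_mem_PS (hS : ∀ a ∈ S, ∀ b ∈ S, a + b ∈ S) (hX : X ∈ PS S) (hY : Y ∈ PS S) :
    X + Y ∈ PS S := by
  refine ⟨hX.1.add hY.1, fun s hs => ?_⟩
  obtain ⟨x, hx, y, hy, rfl⟩ := mem_add.1 hs
  exact hS x (hX.2 hx) y (hY.2 hy)

lemma nsmul_mem_PS (hS : ∀ a ∈ S, ∀ b ∈ S, a + b ∈ S) (hX : X ∈ PS S) (n : ℕ) :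
    (n + 1) • X ∈ PS S := by
  induction n with
  | zero => rwa [zero_add, one_nsmul]
  | succ n ih => rw [succ_nsmul]; exact add_mem_PS hS ih hX

lemma singleton_mem_PS_s4 {s : ℕ} (hs : s ∈ S) : ({s} : Finset ℕ) ∈ PS S :=
  ⟨singleton_nonempty s, by simpa using hs⟩

lemma mem_PS_of_le (hk : ∀ n, k ≤ n → n ∈ S) (hX : X.Nonempty) (hXk : ∀ x ∈ X, k ≤ x) :
    X ∈ PS S :=
  ⟨hX, fun x hx => hk x (hXk x hx)⟩

lemma Icc_mem_PS (hk : ∀ n, k ≤ n → n ∈ S) {a b : ℕ} (ha : k ≤ a) (hab : a ≤ b) :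
    Icc a b ∈ PS S :=
  mem_PS_of_le hk (nonempty_Icc.2 hab) fun _ hx => ha.trans (mem_Icc.1 hx).1

/-- Witnesses: `Y = [k, k + 2 l]` and `Z = Y \ {k + l}` with `l = width X`; the sums `x + (k + l)`
lost in `X + Z` are recovered through `minElt X` and `maxElt X`. -/
lemma exists_add_eq_add_of_width_pos (hk : ∀ n, k ≤ n → n ∈ S) (hX : X.Nonempty)
    (hw : 0 < width X) : ∃ Y ∈ PS S, ∃ Z ∈ PS S, Y ≠ Z ∧ X + Y = X + Z := by
  unfold width at hw
  set l := maxElt X - minElt X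
  set Y := Icc k (k + 2 * l)
  have hkZ : k ∈ Y.erase (k + l) := mem_erase.2 ⟨by omega, mem_Icc.2 (by omega)⟩
  refine ⟨Y, Icc_mem_PS hk le_rfl (by omega), Y.erase (k + l),
    mem_PS_of_le hk ⟨k, hkZ⟩ fun x hx => (mem_Icc.1 (mem_of_mem_erase hx)).1,
    fun h => (notMem_erase (k + l) Y) (h ▸ mem_Icc.2 (by omega)), ?_⟩
  refine le_antisymm (fun s hs => ?_) (add_subset_add_left (erase_subset _ _))
  obtain ⟨x, hx, y, hy, rfl⟩ := mem_add.1 hs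
  rw [mem_add]
  by_cases hy' : y = k + l
  · by_cases hxb : x = minElt X
    · exact ⟨maxElt X, maxElt_mem hX, k, hkZ, by omega⟩
    · have := minElt_le hx
      have := le_maxElt hx
      exact ⟨minElt X, minElt_mem hX, x - minElt X + (k + l),
        mem_erase.2 ⟨by omega, mem_Icc.2 (by omega)⟩, by omega⟩
  · exact ⟨x, hx, y, mem_erase.2 ⟨hy', hy⟩, rfl⟩

end PowerSemigroup

lemma StrictMonoOn.le_apply_of_mapsTo {β : Type*} [LinearOrder β] [WellFoundedLT β]
    {σ : β → β} {S : Set β} (hσ : StrictMonoOn σ S) (hmaps : Set.MapsTo σ S S) {s : β}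
    (hs : s ∈ S) : s ≤ σ s :=
  StrictMono.le_apply (f := hmaps.restrict σ S S) (fun a b hab => hσ a.2 b.2 hab)
    (x := ⟨s, hs⟩)

/-- The map induced by `f` on points: `f {s} = {pointMap f s}` for `s ∈ S`. -/
noncomputable def pointMap (f : Finset ℕ → Finset ℕ) (s : ℕ) : ℕ := minElt (f {s})

namespace IsPowerAut

variable {S : Set ℕ} {k : ℕ} {f : Finset ℕ → Finset ℕ} {X Y : Finset ℕ}

lemma map_mem (hf : IsPowerAut S f) (hX : X ∈ PS S) : f X ∈ PS S := hf.1 X hX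

lemma map_add (hf : IsPowerAut S f) (hX : X ∈ PS S) (hY : Y ∈ PS S) :
    f (X + Y) = f X + f Y := hf.2.2.2 X hX Y hY

lemma bijOn (hf : IsPowerAut S f) : Set.BijOn f (PS S) (PS S) :=
  ⟨hf.1, hf.2.1, fun Y hY => hf.2.2.1 Y hY⟩

lemma map_nsmul (hS : ∀ a ∈ S, ∀ b ∈ S, a + b ∈ S) (hf : IsPowerAut S f) (hX : X ∈ PS S)
    (n : ℕ) : f ((n + 1) • X) = (n + 1) • f X := by
  induction n with
  | zero => simp only [zero_add, one_nsmul]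
  | succ n ih => rw [succ_nsmul, hf.map_add (nsmul_mem_PS hS hX n) hX, ih, ← succ_nsmul]

lemma invFunOn (hS : ∀ a ∈ S, ∀ b ∈ S, a + b ∈ S) (hf : IsPowerAut S f) :
    IsPowerAut S (Function.invFunOn f (PS S)) := by
  have hinv := hf.bijOn.invOn_invFunOn
  have hg := hf.bijOn.symm hinv.symm
  refine ⟨fun Y hY => hg.mapsTo hY, fun Y hY Y' hY' h => hg.injOn hY hY' h,
    fun X hX => ⟨f X, hf.map_mem hX, hinv.1 hX⟩, fun Y hY Y' hY' => hf.bijOn.injOn ?_ ?_ ?_⟩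
  · exact hg.mapsTo (add_mem_PS hS hY hY')
  · exact add_mem_PS hS (hg.mapsTo hY) (hg.mapsTo hY')
  · rw [hf.map_add (hg.mapsTo hY) (hg.mapsTo hY'), hinv.2 hY, hinv.2 hY',
      hinv.2 (add_mem_PS hS hY hY')]

section Fixed

variable {a b s : ℕ}
variable (hS : ∀ a ∈ S, ∀ b ∈ S, a + b ∈ S) (hk : ∀ n, k ≤ n → n ∈ S) (hf : IsPowerAut S f)
include hS hk hf

lemma map_singleton_eq (hs : s ∈ S) : f {s} = {pointMap f s} := by
  have hsPS := singleton_mem_PS_s4 hs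
  have hA := hf.map_mem hsPS
  have hw : width (f {s}) = 0 := by
    by_contra hw
    obtain ⟨Y, hY, Z, hZ, hYZ, he⟩ :=
      exists_add_eq_add_of_width_pos hk hA.1 (Nat.pos_of_ne_zero hw)
    obtain ⟨Y', hY', rfl⟩ := hf.bijOn.surjOn hY
    obtain ⟨Z', hZ', rfl⟩ := hf.bijOn.surjOn hZ
    rw [← hf.map_add hsPS hY', ← hf.map_add hsPS hZ'] at he
    exact hYZ (congrArg f (singleton_add_right_injective s
      (hf.bijOn.injOn (add_mem_PS hS hsPS hY') (add_mem_PS hS hsPS hZ') he)))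
  have := eq_Icc_of_width_le_one hA.1 (by omega)
  unfold width at hw
  rw [this, show maxElt (f {s}) = minElt (f {s}) by have := minElt_le_maxElt hA.1; omega,
    Icc_self, pointMap]

lemma pointMap_mem (hs : s ∈ S) : pointMap f s ∈ S :=
  (hf.map_mem (singleton_mem_PS_s4 hs)).2 (by simp [hf.map_singleton_eq hS hk hs])

lemma pointMap_injOn : Set.InjOn (pointMap f) S := fun a ha b hb h =>
  singleton_injective (hf.bijOn.injOn (singleton_mem_PS_s4 ha) (singleton_mem_PS_s4 hb)
    (by rw [hf.map_singleton_eq hS hk ha, hf.map_singleton_eq hS hk hb, h]))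

lemma pointMap_add (ha : a ∈ S) (hb : b ∈ S) :
    pointMap f (a + b) = pointMap f a + pointMap f b := by
  have h := hf.map_add (singleton_mem_PS_s4 ha) (singleton_mem_PS_s4 hb)
  rw [singleton_add_singleton, hf.map_singleton_eq hS hk (hS a ha b hb),
    hf.map_singleton_eq hS hk ha, hf.map_singleton_eq hS hk hb, singleton_add_singleton] at h
  exact singleton_injective h

lemma pointMap_succ_mul (hs : s ∈ S) (n : ℕ) :
    pointMap f ((n + 1) * s) = (n + 1) * pointMap f s := by
  have h := hf.map_nsmul hS (singleton_mem_PS_s4 hs) n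
  have hns := nsmul_mem_PS hS (singleton_mem_PS_s4 hs) n
  rw [nsmul_singleton, smul_eq_mul] at hns
  rw [nsmul_singleton, hf.map_singleton_eq hS hk hs, nsmul_singleton, smul_eq_mul, smul_eq_mul,
    hf.map_singleton_eq hS hk (hns.2 (mem_singleton_self _))] at h
  exact singleton_injective h

lemma mul_pointMap_comm (ha : a ∈ S) (hb : b ∈ S) (ha0 : 0 < a) (hb0 : 0 < b) :
    a * pointMap f b = b * pointMap f a := by
  obtain ⟨m, rfl⟩ : ∃ m, a = m + 1 := ⟨a - 1, by omega⟩
  obtain ⟨n, rfl⟩ : ∃ n, b = n + 1 := ⟨b - 1, by omega⟩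
  rw [← hf.pointMap_succ_mul hS hk hb m, ← hf.pointMap_succ_mul hS hk ha n, mul_comm]

lemma strictMonoOn_pointMap : StrictMonoOn (pointMap f) S := by
  intro a ha b hb hab
  have hne : pointMap f a ≠ pointMap f b := fun h => hab.ne (hf.pointMap_injOn hS hk ha hb h)
  rcases Nat.eq_zero_or_pos a with rfl | ha0
  · have h0 : pointMap f 0 = 0 := by simpa using hf.pointMap_add hS hk ha ha
    omega
  · have := hf.mul_pointMap_comm hS hk ha hb ha0 (ha0.trans hab)
    by_contra hle
    have hlt : pointMap f b < pointMap f a := lt_of_le_of_ne (not_lt.1 hle) hne.symm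
    nlinarith

lemma le_pointMap (hs : s ∈ S) : s ≤ pointMap f s :=
  (hf.strictMonoOn_pointMap hS hk).le_apply_of_mapsTo (fun _ ht => hf.pointMap_mem hS hk ht) hs

lemma map_singleton (hs : s ∈ S) : f {s} = {s} := by
  have hσ := hf.map_singleton_eq hS hk hs
  have hστ : pointMap (Function.invFunOn f (PS S)) (pointMap f s) = s := by
    rw [pointMap, ← hσ, hf.bijOn.invOn_invFunOn.1 (singleton_mem_PS_s4 hs), minElt_singleton]
  have := (hf.invFunOn hS).le_pointMap hS hk (hf.pointMap_mem hS hk hs)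
  rw [hσ, le_antisymm (by omega) (hf.le_pointMap hS hk hs)]

/-- `{k + k} + X = {minElt X + k} + Z`, where `Z` is `X` shifted to have minimum `k`. -/
lemma minElt_le_minElt_map_add (hX : X ∈ PS S) : minElt X ≤ minElt (f X) + k := by
  set Z := X.image (· + k - minElt X)
  have hZ : Z ∈ PS S := mem_PS_of_le hk (hX.1.image _) (by
    simp only [Z, mem_image, forall_exists_index, and_imp, forall_apply_eq_imp_iff₂]
    intro x hx
    have := minElt_le hx
    omega)
  have hdecomp : {k + k} + X = {minElt X + k} + Z := by
    simp only [singleton_add, vadd_finset_def, Z, image_image]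
    refine image_congr fun x hx => ?_
    have := minElt_le (mem_coe.1 hx)
    simp only [Function.comp_apply, vadd_eq_add]
    omega
  have hkk := hk (k + k) (by omega)
  have hmk := hk (minElt X + k) (by omega)
  have h := congrArg (fun Y => minElt (f Y)) hdecomp
  rw [hf.map_add (singleton_mem_PS_s4 hkk) hX, hf.map_add (singleton_mem_PS_s4 hmk) hZ,
    hf.map_singleton hS hk hkk, hf.map_singleton hS hk hmk,
    minElt_add (singleton_nonempty _) (hf.map_mem hX).1,
    minElt_add (singleton_nonempty _) (hf.map_mem hZ).1, minElt_singleton, minElt_singleton] at h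
  omega

lemma minElt_le_minElt_map (hX : X ∈ PS S) : minElt X ≤ minElt (f X) := by
  have h := hf.minElt_le_minElt_map_add hS hk (nsmul_mem_PS hS hX k)
  rw [hf.map_nsmul hS hX k, minElt_nsmul hX.1, minElt_nsmul (hf.map_mem hX).1] at h
  nlinarith

lemma minElt_map (hX : X ∈ PS S) : minElt (f X) = minElt X := by
  refine le_antisymm ?_ (hf.minElt_le_minElt_map hS hk hX)
  have h := (hf.invFunOn hS).minElt_le_minElt_map hS hk (hf.map_mem hX)
  rwa [hf.bijOn.invOn_invFunOn.1 hX] at h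

/-- Apply `f` to `X + [k, k + l] + {k} = {minElt X + k} + [k, k + width X + l]`. -/
lemma width_map_add_width_map_Icc (hX : X ∈ PS S) {l : ℕ} (hl : width X ≤ l) :
    width (f X) + width (f (Icc k (k + l))) = width (f (Icc k (k + (width X + l)))) := by
  have hI : ∀ m, Icc k (k + m) ∈ PS S := fun m => Icc_mem_PS hk le_rfl (by omega)
  have hkS := hk k le_rfl
  have hmS := hk (minElt X + k) (by omega)
  have key : X + Icc k (k + l) + {k} = {minElt X + k} + Icc k (k + (width X + l)) := by
    have := minElt_le_maxElt hX.1
    rw [add_Icc_of_width_le hX.1 hl, add_comm, singleton_add_Icc, singleton_add_Icc]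
    unfold width
    congr 1 <;> omega
  have h := congrArg (fun Y => width (f Y)) key
  rw [hf.map_add (add_mem_PS hS hX (hI l)) (singleton_mem_PS_s4 hkS), hf.map_add hX (hI l),
    hf.map_add (singleton_mem_PS_s4 hmS) (hI _), hf.map_singleton hS hk hkS,
    hf.map_singleton hS hk hmS, width_add ((hf.map_mem hX).1.add (hf.map_mem (hI l)).1)
      (singleton_nonempty k), width_add (hf.map_mem hX).1 (hf.map_mem (hI l)).1,
    width_add (singleton_nonempty _) (hf.map_mem (hI _)).1, width_singleton,
    width_singleton] at h
  omega

lemma width_map_Icc (n : ℕ) :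
    width (f (Icc k (k + n))) = n * width (f (Icc k (k + 1))) := by
  induction n with
  | zero => rw [add_zero, Icc_self, hf.map_singleton hS hk (hk k le_rfl), width_singleton, zero_mul]
  | succ n ih =>
    rcases n.eq_zero_or_pos with rfl | hn
    · rw [zero_add, one_mul]
    have h := hf.width_map_add_width_map_Icc hS hk (Icc_mem_PS hk le_rfl (by omega : k ≤ k + 1))
      (l := n) (by rw [width_Icc (by omega)]; omega)
    rw [width_Icc (by omega), show k + 1 - k + n = n + 1 by omega] at h
    rw [← h, ih]
    ring

lemma width_map (hX : X ∈ PS S) : width (f X) = width X * width (f (Icc k (k + 1))) := by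
  have h := hf.width_map_add_width_map_Icc hS hk hX le_rfl
  rw [hf.width_map_Icc hS hk (width X), hf.width_map_Icc hS hk (width X + width X), add_mul] at h
  linarith

lemma width_map_Icc_one : width (f (Icc k (k + 1))) = 1 := by
  have hI : Icc k (k + 1) ∈ PS S := Icc_mem_PS hk le_rfl (by omega)
  have h := (hf.invFunOn hS).width_map hS hk (hf.map_mem hI)
  rw [hf.bijOn.invOn_invFunOn.1 hI, hf.width_map hS hk hI, width_Icc (by omega),
    show k + 1 - k = 1 by omega, one_mul] at h
  exact Nat.eq_one_of_mul_eq_one_right h.symm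

lemma map_Icc_one : f (Icc k (k + 1)) = Icc k (k + 1) := by
  have hI : Icc k (k + 1) ∈ PS S := Icc_mem_PS hk le_rfl (by omega)
  have hw := hf.width_map_Icc_one hS hk
  have hmin : minElt (f (Icc k (k + 1))) = k := by
    rw [hf.minElt_map hS hk hI, minElt_Icc (by omega)]
  have hmax : maxElt (f (Icc k (k + 1))) = k + 1 := by
    unfold width at hw
    omega
  rw [eq_Icc_of_width_le_one (hf.map_mem hI).1 hw.le, hmin, hmax]

lemma eq_of_map_singleton_add {a : ℕ} (ha : k ≤ a) (hY : Y ∈ PS S)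
    (h : f ({a} + Y) = {a} + Y) : f Y = Y := by
  rw [hf.map_add (singleton_mem_PS_s4 (hk a ha)) hY, hf.map_singleton hS hk (hk a ha)] at h
  exact singleton_add_right_injective a h

lemma map_Icc_self_add (n : ℕ) : f (Icc k (k + n)) = Icc k (k + n) := by
  induction n with
  | zero => rw [add_zero, Icc_self, hf.map_singleton hS hk (hk k le_rfl)]
  | succ n ih =>
    refine hf.eq_of_map_singleton_add hS hk le_rfl (Icc_mem_PS hk le_rfl (by omega)) ?_
    have e : {k} + Icc k (k + (n + 1)) = Icc k (k + n) + Icc k (k + 1) := by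
      rw [singleton_add_Icc, Icc_add_Icc (by omega) (by omega)]
      congr 1
      omega
    rw [e, hf.map_add (Icc_mem_PS hk le_rfl (by omega)) (Icc_mem_PS hk le_rfl (by omega)), ih,
      hf.map_Icc_one hS hk]

lemma map_Icc {i j : ℕ} (hi : k ≤ i) (hij : i ≤ j) : f (Icc i j) = Icc i j := by
  refine hf.eq_of_map_singleton_add hS hk le_rfl (Icc_mem_PS hk hi hij) ?_
  have e : {k} + Icc i j = {i} + Icc k (k + (j - i)) := by
    rw [singleton_add_Icc, singleton_add_Icc]
    congr 1 <;> omega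
  rw [e, hf.map_add (singleton_mem_PS_s4 (hk i hi)) (Icc_mem_PS hk le_rfl (by omega)),
    hf.map_singleton hS hk (hk i hi), hf.map_Icc_self_add hS hk]

end Fixed

end IsPowerAut

/-- An automorphism of `P(S)` fixes every discrete interval `[i, j]` with `k ≤ i ≤ j`,
where `k` is the critical element of `S`. -/
theorem stmt4 (S : Set ℕ) (hS : IsNumSgp S) (k : ℕ) (hk : IsCritical S k)
    (f : Finset ℕ → Finset ℕ) (hf : IsPowerAut S f)
    (i j : ℕ) (hi : k ≤ i) (hij : i ≤ j) :
    f (Finset.Icc i j) = Finset.Icc i j :=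
  hf.map_Icc hS.1 hk.1 hi hij
end

section
/- Let S = {n ∈ ℕ : n ≥ k} for k ∈ ℕ and let f be an automorphism of P(S). Then f commutes with translations: for every m ∈ ℕ and every X ∈ P(S), f(m + X) = m + f(X), where m + X = {m + x : x ∈ X}. -/
open Pointwise

lemma sum_interval (X : Finset ℕ) (a b N c : ℕ) (ha : a ∈ X) (hb : b ∈ X)
    (hmin : ∀ x ∈ X, a ≤ x) (hmax : ∀ x ∈ X, x ≤ b) (hN : b - a ≤ N) :
    X + Finset.Icc c (c + N) = Finset.Icc (a + c) (b + c + N) := by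
  ext s
  simp only [Finset.mem_add, Finset.mem_Icc]
  constructor
  · rintro ⟨x, hx, y, hy, rfl⟩
    have := hmin x hx; have := hmax x hx; omega
  · rintro ⟨h1, h2⟩
    by_cases hc : s ≤ a + c + N
    · exact ⟨a, ha, s - a, by omega, by omega⟩
    · exact ⟨b, hb, s - b, by omega, by omega⟩

lemma sum_interval_erase (X : Finset ℕ) (a M c : ℕ) (ha : a ∈ X) (hb : a + M ∈ X)
    (hmin : ∀ x ∈ X, a ≤ x) (hmax : ∀ x ∈ X, x ≤ a + M) (hM : 1 ≤ M) :
    X + (Finset.Icc c (c + 2 * M)).erase (c + M) = Finset.Icc (a + c) (a + M + c + 2 * M) := by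
  ext s
  simp only [Finset.mem_add, Finset.mem_erase, Finset.mem_Icc]
  constructor
  · rintro ⟨x, hx, y, ⟨hy0, hy1, hy2⟩, rfl⟩
    have := hmin x hx; have := hmax x hx; omega
  · rintro ⟨h1, h2⟩
    by_cases hc : s ≤ a + c + 2 * M ∧ s ≠ a + c + M
    · exact ⟨a, ha, s - a, by omega, by omega⟩
    · exact ⟨a + M, hb, s - (a + M), by omega, by omega⟩

/-- Any finset with at least two elements fails cancellation in `P([k,∞))`. -/
lemma exists_noncancel (k : ℕ) (X : Finset ℕ) (h2 : 1 < X.card) :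
    ∃ Y ∈ PS {n : ℕ | k ≤ n}, ∃ Z ∈ PS {n : ℕ | k ≤ n}, Y ≠ Z ∧ X + Y = X + Z := by
  have hne : X.Nonempty := by rw [← Finset.card_pos]; omega
  set a := X.min' hne with hadef
  set b := X.max' hne with hbdef
  have hab : a < b := Finset.min'_lt_max'_of_card X h2
  set M := b - a with hM
  have hbam : b = a + M := by omega
  have hM1 : 1 ≤ M := by omega
  refine ⟨Finset.Icc k (k + 2 * M), ⟨⟨k, by simp⟩, fun x hx => by
      simp only [Finset.coe_Icc, Set.mem_Icc] at hx; exact hx.1⟩,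
    (Finset.Icc k (k + 2 * M)).erase (k + M), ⟨⟨k, by simp [Finset.mem_erase]; omega⟩,
      fun x hx => by
        simp only [Finset.coe_erase, Set.mem_diff, Finset.coe_Icc, Set.mem_Icc] at hx
        exact hx.1.1⟩, ?_, ?_⟩
  · intro h
    have h1 : k + M ∈ Finset.Icc k (k + 2 * M) := by simp; omega
    rw [h] at h1
    exact (Finset.notMem_erase _ _) h1
  · rw [sum_interval X a b (2 * M) k (X.min'_mem hne) (X.max'_mem hne)
      (fun x hx => X.min'_le x hx) (fun x hx => X.le_max' x hx) (by omega),
      sum_interval_erase X a M k (X.min'_mem hne) (hbam ▸ X.max'_mem hne)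
      (fun x hx => X.min'_le x hx) (fun x hx => hbam ▸ X.le_max' x hx) hM1]
    rw [hbam]

lemma singleton_cancel {s : ℕ} {Y Z : Finset ℕ} (h : ({s} : Finset ℕ) + Y = {s} + Z) :
    Y = Z := by
  ext y
  constructor <;> intro hy
  · have h1 : s + y ∈ ({s} : Finset ℕ) + Z := h ▸ Finset.add_mem_add (Finset.mem_singleton_self s) hy
    simp only [Finset.mem_add, Finset.mem_singleton] at h1
    obtain ⟨x, rfl, z, hz, hxz⟩ := h1
    have : z = y := by omega
    exact this ▸ hz
  · have h1 : s + y ∈ ({s} : Finset ℕ) + Y := h ▸ Finset.add_mem_add (Finset.mem_singleton_self s) hy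
    simp only [Finset.mem_add, Finset.mem_singleton] at h1
    obtain ⟨x, rfl, z, hz, hxz⟩ := h1
    have : z = y := by omega
    exact this ▸ hz

/-- An automorphism of `P([k, ∞))` commutes with translations:
`f (m + X) = m + f X` for all `m ∈ ℕ`. -/
theorem stmt9 (k : ℕ) (S : Set ℕ) (hS : S = {n : ℕ | k ≤ n})
    (f : Finset ℕ → Finset ℕ) (hf : IsPowerAut S f) :
    ∀ m : ℕ, ∀ X ∈ PS S, f ({m} + X) = {m} + f X := by
  subst hS
  obtain ⟨hmem, hinj, hsurj, hadd⟩ := hf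
  have hsing : ∀ s, k ≤ s → ({s} : Finset ℕ) ∈ PS {n : ℕ | k ≤ n} := by
    intro s hs
    exact ⟨⟨s, Finset.mem_singleton_self s⟩, by simpa using hs⟩
  have hPSadd : ∀ (m : ℕ), ∀ X ∈ PS {n : ℕ | k ≤ n}, ({m} : Finset ℕ) + X ∈ PS {n : ℕ | k ≤ n} := by
    rintro m X ⟨hXne, hXsub⟩
    obtain ⟨x, hx⟩ := hXne
    refine ⟨⟨m + x, Finset.add_mem_add (Finset.mem_singleton_self m) hx⟩, fun y hy => ?_⟩
    · simp only [Finset.coe_add, Set.mem_add, Finset.coe_singleton, Set.mem_singleton_iff] at hy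
      obtain ⟨u, rfl, x, hx, rfl⟩ := hy
      have := hXsub hx
      simp only [Set.mem_setOf_eq] at this ⊢
      omega
  -- f maps singletons to singletons
  have key : ∀ s, k ≤ s → ∃ t, k ≤ t ∧ f {s} = {t} := by
    intro s hs
    obtain ⟨Fne, Fsub⟩ := hmem {s} (hsing s hs)
    by_cases hcard : 1 < (f {s}).card
    · exfalso
      obtain ⟨Y, hY, Z, hZ, hYZ, hsum⟩ := exists_noncancel k (f {s}) hcard
      obtain ⟨Y', hY', rfl⟩ := hsurj Y hY
      obtain ⟨Z', hZ', rfl⟩ := hsurj Z hZ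
      have : f ({s} + Y') = f ({s} + Z') := by
        rw [hadd {s} (hsing s hs) Y' hY', hadd {s} (hsing s hs) Z' hZ', hsum]
      have h2 : {s} + Y' = {s} + Z' :=
        hinj _ (hPSadd s Y' hY') _ (hPSadd s Z' hZ') this
      exact hYZ (congrArg f (singleton_cancel h2))
    · have hc1 : (f {s}).card = 1 := by
        have := Finset.card_pos.mpr Fne; omega
      obtain ⟨t, ht⟩ := Finset.card_eq_one.mp hc1
      refine ⟨t, ?_, ht⟩
      have : t ∈ f {s} := ht ▸ Finset.mem_singleton_self t
      exact Fsub this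
  -- the induced map on singletons
  choose g hg1 hg2 using fun n => key (k + n) (Nat.le_add_right k n)
  -- additivity of g
  have hgadd : ∀ n m : ℕ, g (k + n + m) = g n + g m := by
    intro n m
    have h1 : f ({k + n} + {k + m}) = {g n} + {g m} := by
      rw [hadd _ (hsing _ (by omega)) _ (hsing _ (by omega)), hg2 n, hg2 m]
    have h2 : ({k + n} : Finset ℕ) + {k + m} = {k + (k + n + m)} := by
      rw [Finset.singleton_add_singleton]; congr 1; omega
    rw [h2, hg2 (k + n + m)] at h1
    have := Finset.singleton_injective (h1.trans (Finset.singleton_add_singleton _ _))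
    exact this
  -- g is injective
  have hginj : ∀ n m, g n = g m → n = m := by
    intro n m h
    have : f {k + n} = f {k + m} := by rw [hg2 n, hg2 m, h]
    have := hinj _ (hsing _ (by omega)) _ (hsing _ (by omega)) this
    have := Finset.singleton_injective this
    omega
  -- g is surjective onto [k, ∞)
  have hgsurj : ∀ t, k ≤ t → ∃ n, g n = t := by
    intro t ht
    obtain ⟨X, hX, hfX⟩ := hsurj {t} (hsing t ht)
    by_cases hcard : 1 < X.card
    · exfalso
      obtain ⟨Y, hY, Z, hZ, hYZ, hsum⟩ := exists_noncancel k X hcard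
      have h1 : f (X + Y) = f (X + Z) := by rw [hsum]
      rw [hadd X hX Y hY, hadd X hX Z hZ, hfX] at h1
      exact hYZ (hinj Y hY Z hZ (singleton_cancel h1))
    · have hc1 : X.card = 1 := by have := Finset.card_pos.mpr hX.1; omega
      obtain ⟨s, rfl⟩ := Finset.card_eq_one.mp hc1
      have hks : k ≤ s := by simpa using hX.2 (Finset.mem_singleton_self s)
      refine ⟨s - k, ?_⟩
      have : f {k + (s - k)} = {t} := by rw [show k + (s - k) = s by omega, hfX]
      have := (hg2 (s - k)).symm.trans this
      exact Finset.singleton_injective this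
  -- g n = k + n
  have hstep : ∀ n, g (n + 1) + g 0 = g n + g 1 := by
    intro n
    have h1 := hgadd (n + 1) 0
    have h2 := hgadd n 1
    rw [show k + (n + 1) + 0 = k + n + 1 from by omega] at h1
    omega
  have hlin : ∀ n, g n + n * g 0 = g 0 + n * g 1 := by
    intro n
    induction n with
    | zero => simp
    | succ m ih =>
      have h := hstep m
      have e1 : (m + 1) * g 0 = m * g 0 + g 0 := by ring
      have e2 : (m + 1) * g 1 = m * g 1 + g 1 := by ring
      omega
  have hg0k : k ≤ g 0 := hg1 0
  have hd : g 0 < g 1 := by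
    rcases Nat.lt_trichotomy (g 0) (g 1) with h | h | h
    · exact h
    · exact absurd (hginj 0 1 h) (by omega)
    · exfalso
      have hl := hlin (g 0 + 1)
      have hmul : (g 0 + 1) * (g 1 + 1) ≤ (g 0 + 1) * g 0 := Nat.mul_le_mul_left _ h
      have e : (g 0 + 1) * (g 1 + 1) = (g 0 + 1) * g 1 + (g 0 + 1) := by ring
      omega
  have hgid : ∀ n, g n = k + n := by
    have hg0 : g 0 = k := by
      obtain ⟨n, hn⟩ := hgsurj k le_rfl
      have hl := hlin n
      have hmul : n * (g 0 + 1) ≤ n * g 1 := Nat.mul_le_mul_left _ (Nat.succ_le_of_lt hd)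
      have e : n * (g 0 + 1) = n * g 0 + n := by ring
      omega
    have hg1' : g 1 = k + 1 := by
      obtain ⟨n, hn⟩ := hgsurj (k + 1) (by omega)
      have hl := hlin n
      rw [hg0, hn] at hl
      by_contra hne
      have h2 : k + 2 ≤ g 1 := by omega
      rcases Nat.eq_zero_or_pos n with rfl | hn0
      · omega
      · have hmul : n * (k + 2) ≤ n * g 1 := Nat.mul_le_mul_left _ h2
        have e : n * (k + 2) = n * k + 2 * n := by ring
        linarith
    intro n
    have hl := hlin n
    rw [hg0, hg1'] at hl
    have e : n * (k + 1) = n * k + n := by ring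
    omega
  have hfsing : ∀ s, k ≤ s → f {s} = {s} := by
    intro s hs
    have := hg2 (s - k)
    rw [show k + (s - k) = s from by omega, hgid (s - k),
      show k + (s - k) = s from by omega] at this
    exact this
  -- main argument
  intro m X hX
  have hmX : ({m} : Finset ℕ) + X ∈ PS {n : ℕ | k ≤ n} := hPSadd m X hX
  have h1 : f ({k} + ({m} + X)) = {k} + f ({m} + X) := by
    rw [hadd {k} (hsing k le_rfl) _ hmX, hfsing k le_rfl]
  have h2 : ({k} : Finset ℕ) + ({m} + X) = {k + m} + X := by
    rw [← add_assoc, Finset.singleton_add_singleton]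
  have h3 : f ({k + m} + X) = {k} + ({m} + f X) := by
    rw [hadd _ (hsing (k + m) (by omega)) X hX, hfsing (k + m) (by omega),
      ← add_assoc, Finset.singleton_add_singleton]
  rw [h2, h3] at h1
  exact (singleton_cancel h1.symm)
end

section
/- Let S = {n ∈ ℕ : n ≥ k}. Define X ∼ Y on P(S) iff Y = m + X or X = m + Y for some m ∈ ℕ. Then ∼ is a congruence on P(S) (an equivalence relation compatible with setwise addition), and the quotient monoid P(S)/∼ is isomorphic to the reduced power monoid P₀(ℕ) of finite subsets of ℕ containing 0, via the map sending the class of X to X − α(X). -/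
open Pointwise

/-- The translation relation: `X ∼ Y` iff `Y = m + X` or `X = m + Y` for some `m ∈ ℕ`. -/
def TrRel (X Y : Finset ℕ) : Prop := ∃ m : ℕ, Y = {m} + X ∨ X = {m} + Y

/-- The normalization map `X ↦ X - α(X)`. -/
def phi (X : Finset ℕ) : Finset ℕ :=
  if h : X.Nonempty then X.image (fun x => x - X.min' h) else ∅

/-!
Every nonempty `X ⊆ ℕ` decomposes as `X = α(X) + φ(X)` with `0 ∈ φ(X)`, and `φ` is invariant
under translation. Hence `X ∼ Y` exactly when `φ X = φ Y`: `∼` is the kernel of `φ`, so it is an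
equivalence, and it is a congruence because `φ` is additive, which follows from
`α(X + Y) = α(X) + α(Y)`. Any `Z ∋ 0` is `φ (k + Z)` with `k + Z ⊆ [k, ∞)`.
-/

lemma Finset.singleton_add_eq_image {α : Type*} [DecidableEq α] [Add α] (a : α)
    (s : Finset α) : {a} + s = s.image (a + ·) := by
  ext
  simp [Finset.mem_add, eq_comm]

lemma Finset.min'_singleton_add {α : Type*} [LinearOrder α] [Add α]
    [AddLeftMono α] (a : α) (s : Finset α) (h : s.Nonempty) :
    ({a} + s).min' (by simpa using h) = a + s.min' h := by
  simp only [Finset.singleton_add_eq_image]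
  exact Finset.min'_image (fun _ _ hle => add_le_add_right hle a) _ _

lemma phi_of_nonempty {X : Finset ℕ} (h : X.Nonempty) :
    phi X = X.image (· - X.min' h) := by
  simp [phi, h]

lemma phi_of_zero_mem {X : Finset ℕ} (h0 : 0 ∈ X) : phi X = X := by
  have hmin : X.min' ⟨0, h0⟩ = 0 := Nat.le_zero.1 (X.min'_le 0 h0)
  simp [phi_of_nonempty ⟨0, h0⟩, hmin]

lemma zero_mem_phi {X : Finset ℕ} (h : X.Nonempty) : 0 ∈ phi X := by
  rw [phi_of_nonempty h]
  exact Finset.mem_image.2 ⟨X.min' h, X.min'_mem h, Nat.sub_self _⟩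

lemma singleton_min'_add_phi {X : Finset ℕ} (h : X.Nonempty) : {X.min' h} + phi X = X := by
  rw [phi_of_nonempty h, Finset.singleton_add_eq_image, Finset.image_image]
  refine (Finset.image_congr fun x hx => ?_).trans Finset.image_id
  have := X.min'_le x hx
  simp only [Function.comp_apply, id]
  omega

lemma phi_singleton_add (m : ℕ) {X : Finset ℕ} (h : X.Nonempty) : phi ({m} + X) = phi X := by
  rw [phi_of_nonempty (by simpa using h), phi_of_nonempty h, Finset.min'_singleton_add m X h,
    Finset.singleton_add_eq_image, Finset.image_image]
  exact Finset.image_congr fun x _ => by simp only [Function.comp_apply]; omega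

lemma eq_singleton_add_of_phi_eq {X Y : Finset ℕ} (hX : X.Nonempty) (hY : Y.Nonempty)
    (hphi : phi X = phi Y) (hle : X.min' hX ≤ Y.min' hY) :
    Y = {Y.min' hY - X.min' hX} + X :=
  calc Y = {Y.min' hY} + phi Y := (singleton_min'_add_phi hY).symm
    _ = {Y.min' hY - X.min' hX} + ({X.min' hX} + phi X) := by
        rw [hphi, ← add_assoc, Finset.singleton_add_singleton, Nat.sub_add_cancel hle]
    _ = {Y.min' hY - X.min' hX} + X := by rw [singleton_min'_add_phi]

lemma trRel_iff_phi_eq {X Y : Finset ℕ} (hX : X.Nonempty) (hY : Y.Nonempty) :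
    TrRel X Y ↔ phi X = phi Y := by
  refine ⟨?_, fun hphi => ?_⟩
  · rintro ⟨m, rfl | rfl⟩
    · exact (phi_singleton_add m hX).symm
    · exact phi_singleton_add m hY
  · rcases le_total (X.min' hX) (Y.min' hY) with hle | hle
    · exact ⟨_, Or.inl (eq_singleton_add_of_phi_eq hX hY hphi hle)⟩
    · exact ⟨_, Or.inr (eq_singleton_add_of_phi_eq hY hX hphi.symm hle)⟩

lemma phi_add {X Y : Finset ℕ} (hX : X.Nonempty) (hY : Y.Nonempty) :
    phi (X + Y) = phi X + phi Y := by
  have h0 : 0 ∈ phi X + phi Y := Finset.add_mem_add (zero_mem_phi hX) (zero_mem_phi hY)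
  have hsplit : X + Y = {X.min' hX + Y.min' hY} + (phi X + phi Y) := by
    conv_lhs => rw [← singleton_min'_add_phi hX, ← singleton_min'_add_phi hY]
    rw [← Finset.singleton_add_singleton]
    abel
  rw [hsplit, phi_singleton_add _ ⟨0, h0⟩, phi_of_zero_mem h0]

lemma singleton_add_mem_PS_Ici (k : ℕ) {Z : Finset ℕ} (hZ : Z.Nonempty) :
    {k} + Z ∈ PS {n : ℕ | k ≤ n} := by
  refine ⟨by simpa using hZ, fun x hx => ?_⟩
  obtain ⟨z, -, rfl⟩ := Finset.mem_image.1 (Finset.singleton_add_eq_image k Z ▸ hx)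
  exact Nat.le_add_right k z

/-- `∼` is a congruence on `P([k, ∞))` and the quotient monoid `P(S)/∼` is
isomorphic to the reduced power monoid `P₀(ℕ)` via the class of `X ↦ X - α(X)`:
`φ` identifies exactly the `∼`-classes, is surjective onto finite sets containing `0`,
and is additive. -/
theorem stmt10 (k : ℕ) (S : Set ℕ) (hS : S = {n : ℕ | k ≤ n}) :
    (∀ X ∈ PS S, TrRel X X) ∧
    (∀ X ∈ PS S, ∀ Y ∈ PS S, TrRel X Y → TrRel Y X) ∧
    (∀ X ∈ PS S, ∀ Y ∈ PS S, ∀ Z ∈ PS S, TrRel X Y → TrRel Y Z → TrRel X Z) ∧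
    (∀ X ∈ PS S, ∀ X' ∈ PS S, ∀ Y ∈ PS S, ∀ Y' ∈ PS S,
        TrRel X X' → TrRel Y Y' → TrRel (X + Y) (X' + Y')) ∧
    (∀ X ∈ PS S, 0 ∈ phi X) ∧
    (∀ X ∈ PS S, ∀ Y ∈ PS S, (TrRel X Y ↔ phi X = phi Y)) ∧
    (∀ Z : Finset ℕ, 0 ∈ Z → ∃ X ∈ PS S, phi X = Z) ∧
    (∀ X ∈ PS S, ∀ Y ∈ PS S, phi (X + Y) = phi X + phi Y) := by
  have hiff {X Y : Finset ℕ} (hX : X ∈ PS S) (hY : Y ∈ PS S) : TrRel X Y ↔ phi X = phi Y :=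
    trRel_iff_phi_eq hX.1 hY.1
  refine ⟨?_, ?_, ?_, ?_, fun X hX => zero_mem_phi hX.1, fun X hX Y hY => hiff hX hY, ?_,
    fun X hX Y hY => phi_add hX.1 hY.1⟩
  · exact fun X hX => (hiff hX hX).2 rfl
  · exact fun X hX Y hY h => (hiff hY hX).2 ((hiff hX hY).1 h).symm
  · exact fun X hX Y hY Z hZ hXY hYZ =>
      (hiff hX hZ).2 (((hiff hX hY).1 hXY).trans ((hiff hY hZ).1 hYZ))
  · intro X hX X' hX' Y hY Y' hY' hXX' hYY'
    rw [trRel_iff_phi_eq (hX.1.add hY.1) (hX'.1.add hY'.1), phi_add hX.1 hY.1,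
      phi_add hX'.1 hY'.1, (hiff hX hX').1 hXX', (hiff hY hY').1 hYY']
  · intro Z h0
    exact ⟨{k} + Z, hS ▸ singleton_add_mem_PS_Ici k ⟨0, h0⟩,
      by rw [phi_singleton_add k ⟨0, h0⟩, phi_of_zero_mem h0]⟩
end

section
/- Let S be a numerical semigroup with critical element k, and let f be an automorphism of P(S) whose restriction to P([k, ∞)) is the identity. Then f is the identity automorphism of P(S). -/
open Pointwise

/-- If an automorphism `f` of `P(S)` restricts to the identity on `P([k, ∞))`,
where `k` is the critical element of `S`, then `f` is the identity on `P(S)`. -/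
theorem stmt13 (S : Set ℕ) (hS : IsNumSgp S) (k : ℕ) (hk : IsCritical S k)
    (f : Finset ℕ → Finset ℕ) (hf : IsPowerAut S f)
    (hid : ∀ X ∈ PS {n : ℕ | k ≤ n}, f X = X) :
    ∀ X ∈ PS S, f X = X := by
  intro X hX
  obtain ⟨hmap, hinj, hsurj, hadd⟩ := hf
  have hkS : ({k} : Finset ℕ) ∈ PS S := by
    refine ⟨Finset.singleton_nonempty k, ?_⟩
    intro x hx
    simp only [Finset.coe_singleton, Set.mem_singleton_iff] at hx
    exact hk.1 x (le_of_eq hx.symm)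
  have hkK : ({k} : Finset ℕ) ∈ PS {n : ℕ | k ≤ n} := by
    refine ⟨Finset.singleton_nonempty k, ?_⟩
    intro x hx
    simp only [Finset.coe_singleton, Set.mem_singleton_iff] at hx
    simp [hx]
  have hXkK : X + {k} ∈ PS {n : ℕ | k ≤ n} := by
    refine ⟨hX.1.add (Finset.singleton_nonempty k), ?_⟩
    intro x hx
    simp only [Finset.coe_add, Set.mem_add] at hx
    obtain ⟨a, _, b, hb, rfl⟩ := hx
    simp only [Finset.coe_singleton, Set.mem_singleton_iff] at hb
    simp only [Set.mem_setOf_eq, hb]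
    omega
  have h1 : f (X + {k}) = X + {k} := hid _ hXkK
  have h2 : f ({k} : Finset ℕ) = {k} := hid _ hkK
  have h3 : f X + {k} = X + {k} := by
    rw [← h2, ← hadd X hX {k} hkS, h1, h2]
  have key : ∀ A : Finset ℕ, A + {k} = A.image (· + k) := by
    intro A
    ext x
    simp [Finset.mem_add]
  have : (f X).image (· + k) = X.image (· + k) := by
    rw [← key, ← key]; exact h3
  exact Finset.image_injective (add_left_injective k) this
end
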